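/- Let M be a Garside monoid with Garside element Δ, and for g ∈ M let LF(g) denote the left gcd of g and Δ. Then for all g, h ∈ M: LF(g·h) = LF(g·LF(h)). -/

import Mathlib

namespace Garside

variable {M : Type*} [Monoid M]

/-- `a` left-divides `b`. -/
def LDvd (a b : M) : Prop := ∃ c, b = a * c

/-- `a` right-divides `b`. -/
def RDvd (a b : M) : Prop := ∃ c, b = c * a

/-- `m` is indivisible (an atom). -/
def Indec (m : M) : Prop := m ≠ 1 ∧ ∀ a b : M, m = a * b → a = 1 ∨ b = 1

/-- The set of lengths of expressions of `m` as a product of atoms. -/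
def exprLengths (m : M) : Set ℕ :=
  {n | ∃ l : List M, (∀ x ∈ l, Indec x) ∧ l.prod = m ∧ l.length = n}

/-- The norm `‖m‖`: supremum of lengths of expressions of `m` as products of atoms. -/
noncomputable def norm (m : M) : ℕ := sSup (exprLengths m)

/-- `M` is a Garside monoid with Garside element `Δ`. -/
structure IsGarside (M : Type*) [Monoid M] (Δ : M) : Prop where
  /- atomicity: every element is a product of atoms, with bounded expression lengths -/
  expr_nonempty : ∀ m : M, (exprLengths m).Nonempty
  expr_bdd : ∀ m : M, BddAbove (exprLengths m)
  mul_left_cancel : ∀ a b c : M, a * b = a * c → b = c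
  mul_right_cancel : ∀ a b c : M, b * a = c * a → b = c
  exists_lgcd : ∀ a b : M, ∃ d, LDvd d a ∧ LDvd d b ∧ ∀ e, LDvd e a → LDvd e b → LDvd e d
  exists_llcm : ∀ a b : M, ∃ l, LDvd a l ∧ LDvd b l ∧ ∀ e, LDvd a e → LDvd b e → LDvd l e
  exists_rgcd : ∀ a b : M, ∃ d, RDvd d a ∧ RDvd d b ∧ ∀ e, RDvd e a → RDvd e b → RDvd e d
  exists_rlcm : ∀ a b : M, ∃ l, RDvd a l ∧ RDvd b l ∧ ∀ e, RDvd a e → RDvd b e → RDvd l e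
  divisor_iff : ∀ x : M, LDvd x Δ ↔ RDvd x Δ
  divisors_finite : {x : M | LDvd x Δ}.Finite
  generates : Submonoid.closure {x : M | LDvd x Δ} = ⊤

/-- The set of simple divisors of the Garside element. -/
def SimpleDivs (Δ : M) : Set M := {x : M | LDvd x Δ}

/-- `G`, with an injective monoid homomorphism `ι : M →* G`, is the group of fractions
of the monoid `M`. -/
structure IsGroupOfFractions (M G : Type*) [Monoid M] [Group G] (ι : M →* G) : Prop where
  injective : Function.Injective ι
  fraction : ∀ g : G, ∃ a b : M, g = ι a * (ι b)⁻¹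

end Garside

namespace Garside

/-- `d` is a left gcd of `a` and `b`. -/
def IsLGcd {M : Type*} [Monoid M] (d a b : M) : Prop :=
  LDvd d a ∧ LDvd d b ∧ ∀ e, LDvd e a → LDvd e b → LDvd e d

end Garside



/-!
Write `LF(x)` for the left gcd of `x` and `Δ`. Since `LF(h)` left-divides `h`, `LF(g·LF(h))`
is a common left divisor of `g·h` and `Δ`, hence divides `LF(g·h)`. Conversely, `e = LF(g·h)`
left-divides both `g·h` and `g·Δ` (because `Δ` left-divides `g·Δ`). The left lcm of `e` and `g`
has the form `g·t`, and cancelling `g` shows that `t` is a common left divisor of `h` and `Δ`, so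
`t ≤ LF(h)` and `e ≤ g·LF(h)`; thus `e ≤ LF(g·LF(h))`. Mutual divisibility gives equality
because atomicity rules out nontrivial units.
-/

namespace Garside

variable {M : Type*} [Monoid M]

theorem ldvd_iff_dvd {a b : M} : LDvd a b ↔ a ∣ b := Iff.rfl

theorem IsLGcd.dvd_left {d a b : M} (hd : IsLGcd d a b) : d ∣ a := hd.1

theorem IsLGcd.dvd_right {d a b : M} (hd : IsLGcd d a b) : d ∣ b := hd.2.1

theorem IsLGcd.dvd_of_dvd {d a b e : M} (hd : IsLGcd d a b) (ha : e ∣ a) (hb : e ∣ b) : e ∣ d :=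
  hd.2.2 e ha hb

theorem dvd_of_mul_dvd_mul_left [IsLeftCancelMul M] {g a b : M} (h : g * a ∣ g * b) : a ∣ b := by
  obtain ⟨c, hc⟩ := h
  exact ⟨c, mul_left_cancel (by rw [hc, mul_assoc])⟩

theorem dvd_antisymm_of_subsingleton_units [IsLeftCancelMul M] [Subsingleton Mˣ] {a b : M}
    (hab : a ∣ b) (hba : b ∣ a) : a = b := by
  obtain ⟨c, rfl⟩ := hab
  obtain ⟨c', hc'⟩ := hba
  have hcc' : c * c' = 1 := mul_left_cancel (a := a) (by rw [mul_one, ← mul_assoc, ← hc'])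
  rw [(isUnit_iff_exists_inv.mpr ⟨c', hcc'⟩).eq_one, mul_one]

theorem zero_mem_exprLengths_one : 0 ∈ exprLengths (1 : M) := ⟨[], by simp⟩

theorem add_mem_exprLengths_mul {x y : M} {m n : ℕ} (hm : m ∈ exprLengths x)
    (hn : n ∈ exprLengths y) : m + n ∈ exprLengths (x * y) := by
  obtain ⟨l, hl, rfl, rfl⟩ := hm
  obtain ⟨l', hl', rfl, rfl⟩ := hn
  refine ⟨l ++ l', ?_, List.prod_append, List.length_append⟩
  simpa only [List.mem_append, or_imp, forall_and] using ⟨hl, hl'⟩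

theorem mul_mem_exprLengths_pow {x : M} {n : ℕ} (hn : n ∈ exprLengths x) (k : ℕ) :
    k * n ∈ exprLengths (x ^ k) := by
  induction k with
  | zero => simpa using zero_mem_exprLengths_one
  | succ k ih => simpa [pow_succ, add_mul] using add_mem_exprLengths_mul ih hn

theorem pos_of_mem_exprLengths {x : M} (hx : x ≠ 1) {n : ℕ} (hn : n ∈ exprLengths x) : 0 < n := by
  obtain ⟨l, -, rfl, rfl⟩ := hn
  exact List.length_pos_iff.mpr (by rintro rfl; exact hx List.prod_nil)

/-- If `x * y = 1` with `x ≠ 1`, the powers of `x * y` give expressions of `1` of unbounded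
length. -/
theorem eq_one_of_mul_eq_one_of_bddAbove (hne : ∀ m : M, (exprLengths m).Nonempty)
    (hbdd : BddAbove (exprLengths (1 : M))) {x y : M} (hxy : x * y = 1) : x = 1 := by
  by_contra hx
  obtain ⟨m, hm⟩ := hne x
  obtain ⟨n, hn⟩ := hne y
  obtain ⟨B, hB⟩ := hbdd
  have hpos : 0 < m + n := Nat.add_pos_left (pos_of_mem_exprLengths hx hm) n
  have hmem := mul_mem_exprLengths_pow (add_mem_exprLengths_mul hm hn) (B + 1)
  rw [hxy, one_pow] at hmem
  nlinarith [hB hmem]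

namespace IsGarside

variable {Δ : M}

theorem isLeftCancelMul (hG : IsGarside M Δ) : IsLeftCancelMul M := ⟨hG.mul_left_cancel⟩

theorem subsingleton_units (hG : IsGarside M Δ) : Subsingleton Mˣ :=
  Subsingleton.units_of_isUnit fun _ ⟨u, hu⟩ ↦
    eq_one_of_mul_eq_one_of_bddAbove hG.expr_nonempty (hG.expr_bdd 1) (hu ▸ u.mul_inv)

theorem dvd_antisymm (hG : IsGarside M Δ) {a b : M} (hab : a ∣ b) (hba : b ∣ a) : a = b :=
  have := hG.isLeftCancelMul
  have := hG.subsingleton_units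
  dvd_antisymm_of_subsingleton_units hab hba

/-- For a simple divisor `s`, writing `Δ = s · s' = s' · s''` gives `s · Δ = Δ · s''`. -/
theorem delta_dvd_mul_delta (hG : IsGarside M Δ) (x : M) : Δ ∣ x * Δ := by
  have hx : x ∈ Submonoid.closure {s : M | LDvd s Δ} := hG.generates ▸ Submonoid.mem_top x
  induction hx using Submonoid.closure_induction with
  | mem s hs =>
    obtain ⟨s', hs'⟩ := hs
    obtain ⟨s'', hs''⟩ := (hG.divisor_iff s').mpr ⟨s, hs'⟩
    exact ⟨s'', by nth_rewrite 1 [hs'']; rw [← mul_assoc, ← hs']⟩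
  | one => simp
  | mul a b _ _ iha ihb =>
    obtain ⟨b', hb'⟩ := ihb
    rw [mul_assoc, hb', ← mul_assoc]
    exact dvd_mul_of_dvd_left iha b'

theorem dvd_mul_of_isLGcd (hG : IsGarside M Δ) {d a b e g : M} (hd : IsLGcd d a b) (ha : e ∣ g * a)
    (hb : e ∣ g * b) : e ∣ g * d := by
  have := hG.isLeftCancelMul
  obtain ⟨l, hel, ⟨t, rfl⟩, hmin⟩ := hG.exists_llcm e g
  have hta : t ∣ a := dvd_of_mul_dvd_mul_left (hmin _ ha (dvd_mul_right g a))
  have htb : t ∣ b := dvd_of_mul_dvd_mul_left (hmin _ hb (dvd_mul_right g b))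
  exact (ldvd_iff_dvd.mp hel).trans (mul_dvd_mul_left g (hd.dvd_of_dvd hta htb))

end IsGarside

end Garside

open Garside in
/-- `LF(x)` is encoded by the predicate `IsLGcd · x Δ`; left gcds being unique, the identity is
stated for arbitrary left fronts. -/
theorem garside_leftFront_mul
    {M : Type*} [Monoid M] (Δ : M) (hG : IsGarside M Δ)
    (g h d e f : M)
    (hd : IsLGcd d h Δ) (he : IsLGcd e (g * h) Δ) (hf : IsLGcd f (g * d) Δ) :
    e = f := by
  have hfe : f ∣ e :=
    he.dvd_of_dvd (hf.dvd_left.trans (mul_dvd_mul_left g hd.dvd_left)) hf.dvd_right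
  have heΔ : e ∣ g * Δ := he.dvd_right.trans (hG.delta_dvd_mul_delta g)
  have hef : e ∣ f := hf.dvd_of_dvd (hG.dvd_mul_of_isLGcd hd he.dvd_left heΔ) he.dvd_right
  exact hG.dvd_antisymm hef hfe
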